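/- arXiv:2012.09789 — 2 statements merged into one kernel-verified Lean document; each statement's English description precedes it below -/
import Mathlib

section
/- For x ≥ 0 and n > 0, the Student's t CDF satisfies F_n(x) = 1 - (1/2)·I_{n/(n+x²)}(n/2, 1/2), where I denotes the regularized incomplete beta function. -/
open Real MeasureTheory

noncomputable def betaFn (p q : ℝ) : ℝ := Real.Gamma p * Real.Gamma q / Real.Gamma (p + q)

noncomputable def studentDensity (n t : ℝ) : ℝ :=
  (1 / (Real.sqrt n * betaFn (1/2) (n/2))) * (1 + t^2 / n) ^ (-(n+1)/2 : ℝ)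

noncomputable def studentCDF (n x : ℝ) : ℝ := ∫ t in Set.Iic x, studentDensity n t

noncomputable def regIncBeta (x p q : ℝ) : ℝ :=
  (1 / betaFn p q) * ∫ t in (0:ℝ)..x, t ^ (p-1 : ℝ) * (1-t) ^ (q-1 : ℝ)

open Set

lemma betaFn_pos {p q : ℝ} (hp : 0 < p) (hq : 0 < q) : 0 < betaFn p q :=
  div_pos (mul_pos (Real.Gamma_pos_of_pos hp) (Real.Gamma_pos_of_pos hq))
    (Real.Gamma_pos_of_pos (by linarith))

lemma beta_complex_eq (p q : ℝ) :
    Complex.betaIntegral p q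
      = ((∫ u in (0:ℝ)..1, u ^ (p-1) * (1-u) ^ (q-1) : ℝ) : ℂ) := by
  rw [Complex.betaIntegral, ← intervalIntegral.integral_ofReal]
  refine intervalIntegral.integral_congr fun u hu => ?_
  rw [uIcc_of_le zero_le_one] at hu
  rw [Complex.ofReal_mul, Complex.ofReal_cpow hu.1 (p-1),
    Complex.ofReal_cpow (by linarith [hu.2] : (0:ℝ) ≤ 1 - u) (q-1)]
  push_cast
  ring

lemma beta_integral_eq {p q : ℝ} (hp : 0 < p) (hq : 0 < q) :
    ∫ u in Ioo (0:ℝ) 1, u ^ (p-1) * (1-u) ^ (q-1) = betaFn p q := by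
  have h := Complex.Gamma_mul_Gamma_eq_betaIntegral
    (s := (p:ℂ)) (t := (q:ℂ)) (by simpa using hp) (by simpa using hq)
  rw [beta_complex_eq] at h
  have h2 : Real.Gamma (p+q) ≠ 0 := (Real.Gamma_pos_of_pos (by linarith)).ne'
  have h3 : ((Real.Gamma p * Real.Gamma q : ℝ) : ℂ)
      = ((Real.Gamma (p+q) * ∫ u in (0:ℝ)..1, u ^ (p-1) * (1-u) ^ (q-1) : ℝ) : ℂ) := by
    push_cast
    rw [← Complex.Gamma_ofReal, ← Complex.Gamma_ofReal, ← Complex.Gamma_ofReal]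
    push_cast at h ⊢
    exact h
  have h4 := Complex.ofReal_injective h3
  have h5 : (∫ u in (0:ℝ)..1, u ^ (p-1) * (1-u) ^ (q-1)) = betaFn p q := by
    rw [betaFn]; field_simp; linarith [h4]
  rw [← h5, intervalIntegral.integral_of_le zero_le_one,
    MeasureTheory.integral_Ioc_eq_integral_Ioo]

lemma beta_integrableOn {p q : ℝ} (hp : 0 < p) (hq : 0 < q) :
    IntegrableOn (fun u : ℝ => u ^ (p-1) * (1-u) ^ (q-1)) (Ioo (0:ℝ) 1) := by
  have h := Complex.betaIntegral_convergent (u := (p:ℂ)) (v := (q:ℂ))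
    (by simpa using hp) (by simpa using hq)
  have h1 : IntegrableOn (fun u : ℝ => (u:ℂ) ^ ((p:ℂ)-1) * ((1:ℂ)-u) ^ ((q:ℂ)-1))
      (Ioc (0:ℝ) 1) := (intervalIntegrable_iff_integrableOn_Ioc_of_le zero_le_one).mp h
  have h2 : IntegrableOn (fun u : ℝ => ((u:ℂ) ^ ((p:ℂ)-1) * ((1:ℂ)-u) ^ ((q:ℂ)-1)).re)
      (Ioc (0:ℝ) 1) := h1.re
  refine ((h2.congr_fun (fun u hu => ?_) measurableSet_Ioc).mono_set Ioo_subset_Ioc_self)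
  have hu0 : (0:ℝ) ≤ u := hu.1.le
  have hu1 : (0:ℝ) ≤ 1 - u := by linarith [hu.2]
  rw [show ((p:ℂ)-1) = ((p-1:ℝ):ℂ) by push_cast; ring,
    show ((q:ℂ)-1) = ((q-1:ℝ):ℂ) by push_cast; ring,
    show ((1:ℂ) - (u:ℂ)) = ((1-u:ℝ):ℂ) by push_cast; ring,
    ← Complex.ofReal_cpow hu0, ← Complex.ofReal_cpow hu1, ← Complex.ofReal_mul,
    Complex.ofReal_re]


section CoV
variable {n x : ℝ} (hn : 0 < n) (hx : 0 ≤ x)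

lemma phi_image (hn : 0 < n) (hx : 0 ≤ x) :
    (fun t : ℝ => n / (n + t^2)) '' Ioi x = Ioo 0 (n / (n + x^2)) := by
  ext u
  constructor
  · rintro ⟨t, ht, rfl⟩
    have ht' : x < t := ht
    have h1 : 0 < n + t^2 := by nlinarith
    have h2 : 0 < n + x^2 := by nlinarith
    refine ⟨by positivity, ?_⟩
    exact div_lt_div_of_pos_left hn h2 (by nlinarith)
  · rintro ⟨hu0, huy⟩
    have h2 : 0 < n + x^2 := by nlinarith
    have h3 : u * (n + x^2) < n := (lt_div_iff₀ h2).mp huy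
    have h4 : x^2 < n / u - n := by
      rw [lt_sub_iff_add_lt, lt_div_iff₀ hu0]; nlinarith
    have h5 : 0 ≤ n / u - n := by nlinarith
    refine ⟨Real.sqrt (n / u - n), ?_, ?_⟩
    · exact (Real.lt_sqrt hx).mpr h4
    · show n / (n + Real.sqrt (n/u - n) ^ 2) = u
      rw [Real.sq_sqrt h5, show n + (n/u - n) = n/u by ring, div_div_eq_mul_div,
        mul_comm, mul_div_assoc, div_self hn.ne', mul_one]
lemma phi_hasDeriv (hn : 0 < n) {t : ℝ} :
    HasDerivAt (fun t : ℝ => n / (n + t^2)) (-(2*n*t) / (n + t^2)^2) t := by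
  have h0 : 0 < n + t^2 := by positivity
  have h1 : HasDerivAt (fun t : ℝ => n + t^2) (2*t) t := by
    simpa using (hasDerivAt_pow 2 t).const_add n
  have h2 := (h1.inv h0.ne').const_mul n
  have h3 : (fun y : ℝ => n * (n + y^2)⁻¹) = fun y : ℝ => n / (n + y^2) := by
    funext y; rw [div_eq_mul_inv]
  simp only [Pi.inv_apply] at h2
  rw [h3] at h2
  exact h2.congr_deriv (by ring)

lemma phi_injOn (hn : 0 < n) (hx : 0 ≤ x) :
    InjOn (fun t : ℝ => n / (n + t^2)) (Ioi x) := by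
  intro a ha b hb hab
  have ha' : 0 < a := lt_of_le_of_lt hx ha
  have hb' : 0 < b := lt_of_le_of_lt hx hb
  have h1 : 0 < n + a^2 := by positivity
  have h2 : 0 < n + b^2 := by positivity
  have : n + a^2 = n + b^2 := by
    have hab' : n / (n + a^2) = n / (n + b^2) := hab
    rw [div_eq_div_iff h1.ne' h2.ne'] at hab'
    exact (mul_left_cancel₀ hn.ne' hab').symm
  nlinarith

lemma phi_pointwise (hn : 0 < n) (hx : 0 ≤ x) {t : ℝ} (ht : t ∈ Ioi x) :
    |(-(2*n*t) / (n + t^2)^2)| •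
      ((n / (n + t^2)) ^ (n/2 - 1 : ℝ) * (1 - n / (n + t^2)) ^ ((1:ℝ)/2 - 1 : ℝ))
    = (2 * betaFn (1/2) (n/2)) * studentDensity n t := by
  have ht0 : 0 < t := lt_of_le_of_lt hx ht
  have hA : 0 < n + t^2 := by positivity
  set A := n + t^2 with hAdef
  have hB : 0 < betaFn (1/2) (n/2) := betaFn_pos one_half_pos (by linarith)
  have habs : |(-(2*n*t) / A^2)| = 2*n*t / A^2 := by
    have hle : (-(2*n*t)) / A^2 ≤ 0 :=
      div_nonpos_of_nonpos_of_nonneg (by nlinarith) (by positivity)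
    rw [abs_of_nonpos hle]; ring
  have h1mu : 1 - n / A = t^2 / A := by field_simp [hAdef]; linarith
  -- express everything via rpow of positive reals
  have e1 : (n / A) ^ (n/2 - 1 : ℝ) = n ^ (n/2 - 1 : ℝ) * A ^ (-(n/2 - 1) : ℝ) := by
    rw [Real.div_rpow hn.le hA.le, Real.rpow_neg hA.le, div_eq_mul_inv]
  have e2 : (t^2 / A) ^ ((1:ℝ)/2 - 1 : ℝ) = t⁻¹ * A ^ ((1:ℝ)/2 : ℝ) := by
    rw [show ((1:ℝ)/2 - 1 : ℝ) = -(1/2:ℝ) by norm_num, Real.rpow_neg (by positivity),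
      ← Real.sqrt_eq_rpow, Real.sqrt_div (by positivity) A, Real.sqrt_sq ht0.le,
      ← Real.sqrt_eq_rpow]
    have hsA : 0 < Real.sqrt A := Real.sqrt_pos.mpr hA
    rw [inv_div]
    field_simp
  have e3 : (1 + t^2 / n) ^ (-(n+1)/2 : ℝ) = A ^ (-(n+1)/2 : ℝ) * n ^ ((n+1)/2 : ℝ) := by
    rw [show (1 + t^2/n) = A / n by field_simp [hAdef]; linarith,
      Real.div_rpow hA.le hn.le, div_eq_mul_inv, ← Real.rpow_neg hn.le,
      show (-(-(n+1)/2) : ℝ) = (n+1)/2 by ring]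
  rw [habs, h1mu, smul_eq_mul, e1, e2, studentDensity, e3, Real.sqrt_eq_rpow]
  have hB' : betaFn (1/2) (n/2) ≠ 0 := hB.ne'
  have h2n : n * n ^ (n/2 - 1 : ℝ) = n ^ (n/2 : ℝ) := by
    nth_rewrite 1 [← Real.rpow_one n]
    rw [← Real.rpow_add hn]; norm_num
  have hAm : (A^2)⁻¹ * A ^ (-(n/2 - 1) : ℝ) * A ^ ((1:ℝ)/2 : ℝ) = A ^ (-(n+1)/2 : ℝ) := by
    rw [← Real.rpow_natCast A 2, ← Real.rpow_neg hA.le, ← Real.rpow_add hA, ← Real.rpow_add hA]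
    congr 1; push_cast; ring
  have hnm : n ^ ((n+1)/2 : ℝ) * (n ^ ((1:ℝ)/2 : ℝ))⁻¹ = n ^ (n/2 : ℝ) := by
    rw [← Real.rpow_neg hn.le, ← Real.rpow_add hn]
    congr 1; ring
  have hL : 2*n*t/A^2 * (n ^ (n/2 - 1 : ℝ) * A ^ (-(n/2 - 1) : ℝ) * (t⁻¹ * A ^ ((1:ℝ)/2 : ℝ)))
      = 2 * n ^ (n/2 : ℝ) * A ^ (-(n+1)/2 : ℝ) := by
    calc 2*n*t/A^2 * (n ^ (n/2 - 1 : ℝ) * A ^ (-(n/2 - 1) : ℝ) * (t⁻¹ * A ^ ((1:ℝ)/2 : ℝ)))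
        = 2 * (n * n ^ (n/2 - 1 : ℝ)) * ((A^2)⁻¹ * A ^ (-(n/2 - 1) : ℝ) * A ^ ((1:ℝ)/2 : ℝ))
            * (t * t⁻¹) := by ring
      _ = 2 * n ^ (n/2 : ℝ) * A ^ (-(n+1)/2 : ℝ) := by
          rw [h2n, hAm, mul_inv_cancel₀ ht0.ne']; ring
  have hR : 2 * betaFn (1/2) (n/2) * (1 / (n ^ ((1:ℝ)/2 : ℝ) * betaFn (1/2) (n/2))
        * (A ^ (-(n+1)/2 : ℝ) * n ^ ((n+1)/2 : ℝ)))
      = 2 * n ^ (n/2 : ℝ) * A ^ (-(n+1)/2 : ℝ) := by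
    have hn12 : (n : ℝ) ^ ((1:ℝ)/2 : ℝ) ≠ 0 := by positivity
    calc 2 * betaFn (1/2) (n/2) * (1 / (n ^ ((1:ℝ)/2 : ℝ) * betaFn (1/2) (n/2))
          * (A ^ (-(n+1)/2 : ℝ) * n ^ ((n+1)/2 : ℝ)))
        = (betaFn (1/2) (n/2) * (betaFn (1/2) (n/2))⁻¹) * 2
            * (n ^ ((n+1)/2 : ℝ) * (n ^ ((1:ℝ)/2 : ℝ))⁻¹) * A ^ (-(n+1)/2 : ℝ) := by
          field_simp
      _ = 2 * n ^ (n/2 : ℝ) * A ^ (-(n+1)/2 : ℝ) := by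
          rw [hnm, mul_inv_cancel₀ hB']; ring
  rw [hL, hR]
end CoV


section Main
variable {n x : ℝ}

lemma cov_integral (hn : 0 < n) (hx : 0 ≤ x) :
    ∫ u in Ioo (0:ℝ) (n/(n+x^2)), u ^ (n/2 - 1 : ℝ) * (1-u) ^ ((1:ℝ)/2 - 1 : ℝ)
      = (2 * betaFn (1/2) (n/2)) * ∫ t in Ioi x, studentDensity n t := by
  rw [← phi_image hn hx,
    integral_image_eq_integral_abs_deriv_smul measurableSet_Ioi
      (fun t _ => (phi_hasDeriv hn).hasDerivWithinAt) (phi_injOn hn hx),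
    ← MeasureTheory.integral_const_mul]
  exact setIntegral_congr_fun measurableSet_Ioi fun t ht => phi_pointwise hn hx ht

lemma cov_integrable (hn : 0 < n) (hx : 0 ≤ x) :
    IntegrableOn (studentDensity n) (Ioi x) := by
  have hx2 : 0 < n + x^2 := by positivity
  have hy1 : n/(n+x^2) ≤ 1 := by rw [div_le_one hx2]; nlinarith
  have hB : 0 < betaFn (1/2) (n/2) := betaFn_pos one_half_pos (by linarith)
  have h1 : IntegrableOn (fun u : ℝ => u ^ (n/2-1:ℝ) * (1-u) ^ ((1:ℝ)/2-1:ℝ))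
      (Ioo 0 (n/(n+x^2))) :=
    (beta_integrableOn (by linarith) one_half_pos).mono_set
      (Ioo_subset_Ioo_right hy1)
  rw [← phi_image hn hx,
    integrableOn_image_iff_integrableOn_abs_deriv_smul measurableSet_Ioi
      (fun t _ => (phi_hasDeriv hn).hasDerivWithinAt) (phi_injOn hn hx)] at h1
  have h2 := h1.congr_fun (fun t ht => phi_pointwise hn hx ht) measurableSet_Ioi
  have h3 : IntegrableOn
      (fun t => (2 * betaFn (1/2) (n/2))⁻¹ * (2 * betaFn (1/2) (n/2) * studentDensity n t))
      (Ioi x) := h2.const_mul ((2 * betaFn (1/2) (n/2)))⁻¹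
  refine h3.congr_fun (fun t _ => ?_) measurableSet_Ioi
  field_simp

lemma studentDensity_continuous (hn : 0 < n) : Continuous (studentDensity n) := by
  unfold studentDensity
  refine continuous_const.mul ?_
  refine Continuous.rpow_const ?_ fun t => Or.inl (by positivity)
  exact continuous_const.add ((continuous_pow 2).div_const n)

/-- For `x ≥ 0`, `F_n(x) = 1 - (1/2) I_{n/(n+x²)}(n/2, 1/2)`. -/
theorem studentCDF_eq_regIncBeta_of_nonneg (n x : ℝ) (hn : 0 < n) (hx : 0 ≤ x) :
    studentCDF n x = 1 - (1/2) * regIncBeta (n / (n + x^2)) (n/2) (1/2) := by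
  have hx2 : 0 < n + x^2 := by positivity
  have hy0 : 0 < n / (n + x^2) := by positivity
  have hB : 0 < betaFn (1/2) (n/2) := betaFn_pos one_half_pos (by linarith)
  set f := studentDensity n with hf
  have hcont : Continuous f := studentDensity_continuous hn
  have hIoi_x : IntegrableOn f (Ioi x) := cov_integrable hn hx
  have hIoi_0 : IntegrableOn f (Ioi 0) := cov_integrable hn le_rfl
  have hIoc : IntegrableOn f (Ioc 0 x) := hcont.integrableOn_Ioc
  have even_f : ∀ t, f (-t) = f t := fun t => by simp [hf, studentDensity, neg_sq]
  have hIic : IntegrableOn f (Iic 0) := by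
    have h_map_neg : ((volume : Measure ℝ).restrict (Ici 0)).map Neg.neg
        = (volume : Measure ℝ).restrict (Iic 0) := by
      conv => rhs; rw [← Measure.map_neg_eq_self (volume : Measure ℝ),
        measurableEmbedding_neg.restrict_map]
      simp
    rw [IntegrableOn, ← h_map_neg, measurableEmbedding_neg.integrable_map_iff]
    have hfc : f ∘ Neg.neg = f := funext fun t => even_f t
    rw [hfc]
    exact Iff.mpr integrableOn_Ici_iff_integrableOn_Ioi hIoi_0
  have hIic_eq : ∫ t in Iic (0:ℝ), f t = ∫ t in Ioi (0:ℝ), f t := by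
    have h := integral_comp_neg_Iic (0:ℝ) f
    simp_rw [even_f, neg_zero] at h
    exact h
  have split1 : ∫ t in Iic x, f t = (∫ t in Iic (0:ℝ), f t) + ∫ t in Ioc 0 x, f t := by
    rw [← Iic_union_Ioc_eq_Iic hx,
      setIntegral_union (Iic_disjoint_Ioc le_rfl) measurableSet_Ioc hIic hIoc]
  have split2 : ∫ t in Ioi (0:ℝ), f t = (∫ t in Ioc 0 x, f t) + ∫ t in Ioi x, f t := by
    rw [← Ioc_union_Ioi_eq_Ioi hx,
      setIntegral_union (Ioc_disjoint_Ioi le_rfl) measurableSet_Ioi hIoc hIoi_x]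
  have covx := cov_integral hn hx
  have cov0 := cov_integral hn (le_refl 0)
  rw [show n / (n + (0:ℝ)^2) = 1 by rw [show n + (0:ℝ)^2 = n by ring, div_self hn.ne']] at cov0
  have hbeta_full : ∫ u in Ioo (0:ℝ) 1, u ^ (n/2-1:ℝ) * (1-u) ^ ((1:ℝ)/2-1:ℝ)
      = betaFn (n/2) (1/2) := beta_integral_eq (by linarith) one_half_pos
  have hBsym : betaFn (n/2) (1/2) = betaFn (1/2) (n/2) := by
    unfold betaFn; rw [mul_comm, add_comm]
  have hI0 : ∫ t in Ioi (0:ℝ), f t = 1/2 := by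
    rw [hbeta_full, hBsym] at cov0
    have h1 : betaFn (1/2) (n/2) * 1
        = betaFn (1/2) (n/2) * (2 * ∫ t in Ioi (0:ℝ), f t) := by
      rw [← hf] at cov0; linear_combination cov0
    have h2 := mul_left_cancel₀ hB.ne' h1
    linarith
  have hRI : regIncBeta (n / (n + x^2)) (n/2) (1/2)
      = (1 / betaFn (1/2) (n/2)) * (2 * betaFn (1/2) (n/2) * ∫ t in Ioi x, f t) := by
    rw [regIncBeta, hBsym]
    congr 1
    rw [intervalIntegral.integral_of_le hy0.le, MeasureTheory.integral_Ioc_eq_integral_Ioo]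
    exact covx
  have hIoc_eq : ∫ t in Ioc (0:ℝ) x, f t = 1/2 - ∫ t in Ioi x, f t := by
    rw [hI0] at split2; linarith
  rw [studentCDF, ← hf, split1, hIic_eq, hI0, hIoc_eq, hRI]
  have hBne := hB.ne'
  field_simp
  ring
end Main
end

section
/- Under the change of variables u² = ln(1 + s²) with sign(u) = sign(s), the Student's t CDF can be written as F_n(x) = (1/B(1/2,n/2)) ∫_{-∞}^{ξ} e^{−n u²/2} g(u) du, where ξ is determined by ξ² = ln(1 + x²/n), sign(ξ) = sign(x), and g(u) = √(u²/(1−e^{−u²})). -/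
open Real MeasureTheory

noncomputable def gFn (u : ℝ) : ℝ :=
  if u = 0 then 1 else Real.sqrt (u^2 / (1 - Real.exp (-u^2)))



noncomputable def phiFn (n u : ℝ) : ℝ := Real.sqrt n * (Real.sign u * Real.sqrt (Real.exp (u^2) - 1))

noncomputable def phiD (n u : ℝ) : ℝ := Real.sqrt n * (|u| * Real.exp (u^2) / Real.sqrt (Real.exp (u^2) - 1))

noncomputable def invFn (n t : ℝ) : ℝ := Real.sign t * Real.sqrt (Real.log (1 + t^2 / n))

lemma exp_sq_sub_one_nonneg (u : ℝ) : 0 ≤ Real.exp (u^2) - 1 := by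
  have := Real.one_le_exp (sq_nonneg u); linarith

lemma exp_sq_sub_one_pos {u : ℝ} (hu : u ≠ 0) : 0 < Real.exp (u^2) - 1 := by
  have h1 : u^2 + 1 ≤ Real.exp (u^2) := Real.add_one_le_exp _
  have h2 : 0 < u^2 := by positivity
  linarith

lemma sign_sq {u : ℝ} (hu : u ≠ 0) : (Real.sign u)^2 = 1 := by
  rcases lt_or_gt_of_ne hu with h | h
  · rw [Real.sign_of_neg h]; ring
  · rw [Real.sign_of_pos h]; ring

lemma phi_sq (n : ℝ) (hn : 0 < n) {u : ℝ} (hu : u ≠ 0) :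
    (phiFn n u)^2 = n * (Real.exp (u^2) - 1) := by
  rw [phiFn, mul_pow, mul_pow, Real.sq_sqrt hn.le, Real.sq_sqrt (exp_sq_sub_one_nonneg u),
    sign_sq hu]; ring

lemma phi_sign (n : ℝ) (hn : 0 < n) {u : ℝ} (hu : u ≠ 0) :
    Real.sign (phiFn n u) = Real.sign u := by
  rcases lt_or_gt_of_ne hu with h | h
  · rw [Real.sign_of_neg h, Real.sign_of_neg]
    rw [phiFn, Real.sign_of_neg h]
    have h2 : 0 < Real.sqrt n * Real.sqrt (Real.exp (u^2) - 1) := by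
      have := exp_sq_sub_one_pos hu; positivity
    nlinarith
  · rw [Real.sign_of_pos h, Real.sign_of_pos]
    rw [phiFn, Real.sign_of_pos h]
    have := exp_sq_sub_one_pos hu; positivity

lemma left_inv (n : ℝ) (hn : 0 < n) (u : ℝ) : invFn n (phiFn n u) = u := by
  rcases eq_or_ne u 0 with rfl | hu
  · simp [invFn, phiFn]
  have h3 : 1 + (phiFn n u)^2 / n = Real.exp (u^2) := by
    rw [phi_sq n hn hu]; field_simp; ring
  rw [invFn, h3, Real.log_exp, phi_sign n hn hu, Real.sqrt_sq_eq_abs]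
  rcases lt_or_gt_of_ne hu with h | h
  · rw [Real.sign_of_neg h, abs_of_neg h]; ring
  · rw [Real.sign_of_pos h, abs_of_pos h]; ring

lemma right_inv (n : ℝ) (hn : 0 < n) (t : ℝ) : phiFn n (invFn n t) = t := by
  rcases eq_or_ne t 0 with rfl | ht
  · simp [invFn, phiFn]
  have ht2 : 0 < t^2 := by positivity
  have hdp : 0 < t^2 / n := div_pos ht2 hn
  have hl : 0 < Real.log (1 + t^2 / n) := by
    apply Real.log_pos; linarith
  have hs : 0 < Real.sqrt (Real.log (1 + t^2 / n)) := Real.sqrt_pos.mpr hl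
  have hsq : (invFn n t)^2 = Real.log (1 + t^2 / n) := by
    rw [invFn, mul_pow, Real.sq_sqrt hl.le]
    rcases lt_or_gt_of_ne ht with h | h
    · rw [Real.sign_of_neg h]; ring
    · rw [Real.sign_of_pos h]; ring
  have hexp : Real.exp ((invFn n t)^2) - 1 = t^2 / n := by
    rw [hsq, Real.exp_log (by linarith)]; ring
  have hsign : Real.sign (invFn n t) = Real.sign t := by
    rcases lt_or_gt_of_ne ht with h | h
    · rw [Real.sign_of_neg h, invFn, Real.sign_of_neg h, Real.sign_of_neg (by nlinarith)]
    · rw [Real.sign_of_pos h, invFn, Real.sign_of_pos h, Real.sign_of_pos (by nlinarith)]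
  have hsn : (0:ℝ) < Real.sqrt n := Real.sqrt_pos.mpr hn
  rw [phiFn, hexp, hsign, Real.sqrt_div ht2.le, Real.sqrt_sq_eq_abs]
  rcases lt_or_gt_of_ne ht with h | h
  · rw [Real.sign_of_neg h, abs_of_neg h]; field_simp
  · rw [Real.sign_of_pos h, abs_of_pos h]; field_simp

lemma phi_strictMono (n : ℝ) (hn : 0 < n) : StrictMono (phiFn n) := by
  intro a b hab
  have hsn : 0 < Real.sqrt n := Real.sqrt_pos.mpr hn
  have key : ∀ u v : ℝ, u < v →
      Real.sign u * Real.sqrt (Real.exp (u^2) - 1) < Real.sign v * Real.sqrt (Real.exp (v^2) - 1) := by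
    intro u v huv
    rcases lt_trichotomy u 0 with hu | hu | hu
    · have h1 : Real.sign u * Real.sqrt (Real.exp (u^2) - 1)
          = -Real.sqrt (Real.exp (u^2) - 1) := by rw [Real.sign_of_neg hu]; ring
      have hneg : Real.sign u * Real.sqrt (Real.exp (u^2) - 1) < 0 := by
        rw [h1]; simp [Real.sqrt_pos.mpr (exp_sq_sub_one_pos hu.ne)]
      rcases lt_trichotomy v 0 with hv | hv | hv
      · have h2 : Real.sign v * Real.sqrt (Real.exp (v^2) - 1)
            = -Real.sqrt (Real.exp (v^2) - 1) := by rw [Real.sign_of_neg hv]; ring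
        rw [h1, h2, neg_lt_neg_iff]
        apply Real.sqrt_lt_sqrt (exp_sq_sub_one_nonneg v)
        have : v^2 < u^2 := by nlinarith
        have := Real.exp_lt_exp.mpr this
        linarith
      · subst hv; simpa using hneg
      · refine hneg.trans_le ?_
        rw [Real.sign_of_pos hv]
        positivity
    · subst hu
      simp only [Real.sign_zero, zero_mul]
      rw [Real.sign_of_pos huv]
      have := exp_sq_sub_one_pos huv.ne'
      rw [one_mul]
      exact Real.sqrt_pos.mpr this
    · have hv : 0 < v := hu.trans huv
      rw [Real.sign_of_pos hu, Real.sign_of_pos hv, one_mul, one_mul]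
      apply Real.sqrt_lt_sqrt (exp_sq_sub_one_nonneg u)
      have : u^2 < v^2 := by nlinarith
      have := Real.exp_lt_exp.mpr this
      linarith
  rw [phiFn, phiFn]
  exact mul_lt_mul_of_pos_left (key a b hab) hsn

lemma phi_hasDerivAt (n : ℝ) (hn : 0 < n) {u : ℝ} (hu : u ≠ 0) :
    HasDerivAt (phiFn n) (phiD n u) u := by
  have he := exp_sq_sub_one_pos hu
  have hder : HasDerivAt (fun v : ℝ => Real.exp (v^2) - 1) (Real.exp (u^2) * (2*u)) u := by
    have h1 : HasDerivAt (fun v : ℝ => v^2) (2*u) u := by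
      simpa using hasDerivAt_pow 2 u
    simpa using (h1.exp.sub_const 1)
  have hsq : HasDerivAt (fun v : ℝ => Real.sqrt (Real.exp (v^2) - 1))
      (Real.exp (u^2) * (2*u) / (2 * Real.sqrt (Real.exp (u^2) - 1))) u :=
    hder.sqrt he.ne'
  have hss : 0 < Real.sqrt (Real.exp (u^2) - 1) := Real.sqrt_pos.mpr he
  rcases lt_or_gt_of_ne hu with h | h
  · have heq : phiFn n =ᶠ[nhds u] fun v => Real.sqrt n * (-Real.sqrt (Real.exp (v^2) - 1)) := by
      filter_upwards [eventually_lt_nhds h] with v hv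
      rw [phiFn, Real.sign_of_neg hv]; ring
    have : HasDerivAt (fun v => Real.sqrt n * (-Real.sqrt (Real.exp (v^2) - 1)))
        (Real.sqrt n * (-(Real.exp (u^2) * (2*u) / (2 * Real.sqrt (Real.exp (u^2) - 1))))) u :=
      (hsq.neg).const_mul _
    have hres := this.congr_of_eventuallyEq heq
    refine hres.congr_deriv ?_
    rw [phiD, abs_of_neg h]
    field_simp
  · have heq : phiFn n =ᶠ[nhds u] fun v => Real.sqrt n * Real.sqrt (Real.exp (v^2) - 1) := by
      filter_upwards [eventually_gt_nhds h] with v hv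
      rw [phiFn, Real.sign_of_pos hv]; ring
    have : HasDerivAt (fun v => Real.sqrt n * Real.sqrt (Real.exp (v^2) - 1))
        (Real.sqrt n * (Real.exp (u^2) * (2*u) / (2 * Real.sqrt (Real.exp (u^2) - 1)))) u :=
      hsq.const_mul _
    have hres := this.congr_of_eventuallyEq heq
    refine hres.congr_deriv ?_
    rw [phiD, abs_of_pos h]
    field_simp

lemma betaFn_pos_s10 {n : ℝ} (hn : 0 < n) : 0 < betaFn (1/2) (n/2) := by
  unfold betaFn
  have h1 := Real.Gamma_pos_of_pos (show (0:ℝ) < 1/2 by norm_num)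
  have h2 := Real.Gamma_pos_of_pos (show (0:ℝ) < n/2 by positivity)
  have h3 := Real.Gamma_pos_of_pos (show (0:ℝ) < 1/2 + n/2 by positivity)
  positivity

lemma integrand_eq (n : ℝ) (hn : 0 < n) {u : ℝ} (hu : u ≠ 0) :
    |phiD n u| * studentDensity n (phiFn n u)
      = (1 / betaFn (1/2) (n/2)) * (Real.exp (-(n * u^2) / 2) * gFn u) := by
  have he := exp_sq_sub_one_pos hu
  have hss : 0 < Real.sqrt (Real.exp (u^2) - 1) := Real.sqrt_pos.mpr he
  have hsn : 0 < Real.sqrt n := Real.sqrt_pos.mpr hn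
  have hB := betaFn_pos_s10 hn
  have habs : |phiD n u| = phiD n u := abs_of_nonneg (by rw [phiD]; positivity)
  have h3 : 1 + (phiFn n u)^2 / n = Real.exp (u^2) := by
    rw [phi_sq n hn hu]; field_simp; ring
  have hrpow : Real.exp (u^2) ^ (-(n+1)/2 : ℝ) = Real.exp (u^2 * (-(n+1)/2)) := by
    rw [Real.rpow_def_of_pos (Real.exp_pos _), Real.log_exp]
  have hexp2 : Real.sqrt (Real.exp (u^2)) = Real.exp (u^2/2) := by
    have h := Real.sqrt_sq (Real.exp_pos (u^2/2)).le
    rw [← h]; congr 1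
    rw [pow_two (Real.exp (u^2/2)), ← Real.exp_add]; congr 1; ring
  have h1me : 1 - Real.exp (-u^2) > 0 := by
    have : Real.exp (-u^2) < 1 := by
      rw [Real.exp_lt_one_iff]
      have : (0:ℝ) < u^2 := by positivity
      linarith
    linarith
  have hg : gFn u = |u| * Real.exp (u^2/2) / Real.sqrt (Real.exp (u^2) - 1) := by
    rw [gFn, if_neg hu]
    have hinv : Real.exp (u^2) * Real.exp (-u^2) = 1 := by
      rw [← Real.exp_add]; simp
    have hq : u^2 / (1 - Real.exp (-u^2)) = u^2 * Real.exp (u^2) / (Real.exp (u^2) - 1) := by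
      rw [div_eq_div_iff h1me.ne' he.ne']; linear_combination u^2 * hinv
    rw [hq, Real.sqrt_div (by positivity), Real.sqrt_mul (sq_nonneg u), Real.sqrt_sq_eq_abs, hexp2]
  have hkey : Real.exp (u^2 * (-(n+1)/2))
      = Real.exp (-(n*u^2)/2) * Real.exp (u^2/2) / Real.exp (u^2) := by
    rw [← Real.exp_add, ← Real.exp_sub]; congr 1; ring
  rw [habs, hg, studentDensity, h3, hrpow, phiD, hkey]
  have hEne := Real.exp_ne_zero (u^2)
  field_simp

/-- Under `u² = ln(1+s²)`, `sign u = sign s`: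
`F_n(x) = (1/B(1/2,n/2)) ∫_{-∞}^{ξ} e^{-nu²/2} g(u) du` with
`ξ² = ln(1+x²/n)`, `sign ξ = sign x`. -/
theorem studentCDF_erfc_representation (n x : ℝ) (hn : 0 < n) :
    studentCDF n x
      = (1 / betaFn (1/2) (n/2)) *
          ∫ u in Set.Iic (Real.sign x * Real.sqrt (Real.log (1 + x^2 / n))),
            Real.exp (-(n * u^2) / 2) * gFn u := by
  have hmono := phi_strictMono n hn
  have hinj : Function.Injective (phiFn n) := Function.LeftInverse.injective (left_inv n hn)
  have hxi : Real.sign x * Real.sqrt (Real.log (1 + x^2 / n)) = invFn n x := rfl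
  set ξ := invFn n x with hξ
  rw [hxi]
  set s := Set.Iic ξ \ {(0:ℝ)} with hs
  have hphi0 : phiFn n 0 = 0 := by simp [phiFn]
  have himg : phiFn n '' s = Set.Iic x \ {(0:ℝ)} := by
    rw [hs, Set.image_diff hinj, Set.image_singleton, hphi0]
    congr 1
    ext t
    simp only [Set.mem_image, Set.mem_Iic]
    constructor
    · rintro ⟨u, hu, rfl⟩
      calc phiFn n u ≤ phiFn n (invFn n x) := hmono.le_iff_le.mpr hu
        _ = x := right_inv n hn x
    · intro ht
      refine ⟨invFn n t, ?_, right_inv n hn t⟩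
      apply hmono.le_iff_le.mp
      rw [right_inv n hn, right_inv n hn]; exact ht
  have hnull : ∀ a : ℝ, (Set.Iic a \ {(0:ℝ)} : Set ℝ) =ᵐ[volume] Set.Iic a := by
    intro a
    rw [MeasureTheory.diff_ae_eq_self]
    exact measure_mono_null Set.inter_subset_right (measure_singleton 0)
  have hmeas : MeasurableSet s := measurableSet_Iic.diff (measurableSet_singleton 0)
  rw [studentCDF, ← setIntegral_congr_set (hnull x), ← himg,
    integral_image_eq_integral_abs_deriv_smul hmeas
      (fun u hu => (phi_hasDerivAt n hn (by simpa using hu.2)).hasDerivWithinAt)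
      hinj.injOn]
  rw [setIntegral_congr_fun hmeas (fun u hu => by
    rw [smul_eq_mul, integrand_eq n hn (by simpa using hu.2)])]
  rw [setIntegral_congr_set (hnull ξ), integral_const_mul]
end
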